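/- arXiv:1609.08983 — 8 statements merged into one kernel-verified Lean document; each statement's English description precedes it below -/
import Mathlib

section
/- Let $r,t \ge 2$ be integers and let $G$ be an $r$-graph on $[n]$ containing no $t$ pairwise disjoint edges. Then for any pair of vertices $i,j$, the compressed hypergraph $\pi_{ij}(G)$ also contains no $t$ pairwise disjoint edges. -/
open Finset

/-- Lagrangian polynomial: sum over edges of products of weights. -/
def lagPoly (G : Finset (Finset ℕ)) (x : ℕ → ℝ) : ℝ := ∑ e ∈ G, ∏ i ∈ e, x i

/-- A feasible weight vector on `[n] = {1,…,n}`. -/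
def IsFeasible (n : ℕ) (x : ℕ → ℝ) : Prop :=
  (∀ i, 0 ≤ x i) ∧ ∑ i ∈ Finset.Icc 1 n, x i = 1

/-- Lagrangian of a hypergraph on `[n]`. -/
noncomputable def lag (n : ℕ) (G : Finset (Finset ℕ)) : ℝ :=
  sSup {v : ℝ | ∃ x : ℕ → ℝ, IsFeasible n x ∧ lagPoly G x = v}

/-- `G` is an `r`-graph on the vertex set `{1,…,n}`. -/
def IsGraphOn (n r : ℕ) (G : Finset (Finset ℕ)) : Prop :=
  ∀ e ∈ G, e ⊆ Finset.Icc 1 n ∧ e.card = r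

/-- The compression `π_{ij}(G)`: each edge `f ∪ {j}` with `f` avoiding `i,j` and
`f ∪ {i} ∉ G` is replaced by `f ∪ {i}`. -/
def compress (G : Finset (Finset ℕ)) (i j : ℕ) : Finset (Finset ℕ) :=
  (G.filter fun e => ¬(j ∈ e ∧ i ∉ e ∧ insert i (e.erase j) ∉ G)) ∪
  ((G.filter fun e => j ∈ e ∧ i ∉ e ∧ insert i (e.erase j) ∉ G).image
    fun e => insert i (e.erase j))

/-- `G` contains `t` pairwise disjoint edges. -/
def HasMatching (G : Finset (Finset ℕ)) (t : ℕ) : Prop :=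
  ∃ M : Finset (Finset ℕ), M ⊆ G ∧ M.card = t ∧
    (M : Set (Finset ℕ)).Pairwise fun e f => Disjoint e f

/-- `G` contains a complete `r`-graph on `p` vertices. -/
def HasClique (G : Finset (Finset ℕ)) (p r : ℕ) : Prop :=
  ∃ S : Finset ℕ, S.card = p ∧ ∀ e ⊆ S, e.card = r → e ∈ G

/-
If a `t`-matching `M` of `π_{ij}(G)` is not already in `G`, one of its edges is a new edge and
so contains `i`; the other edges then avoid `i`. An edge of `π_{ij}(G)` avoiding `i` lies in `G`
together with its shift `j ↦ i`, and a new edge is the shift of an edge of `G`. Hence applying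
the transposition `(i j)` to every vertex turns `M` into a `t`-matching of `G`.
-/

section Swap

variable {α : Type*} [DecidableEq α] {i j : α} {s : Finset α}

theorem Finset.map_swap_of_notMem_of_notMem (hi : i ∉ s) (hj : j ∉ s) :
    s.map (Equiv.swap i j).toEmbedding = s := by
  ext x
  rw [mem_map_equiv, Equiv.symm_swap]
  by_cases hxi : x = i
  · simp [hxi, hi, hj]
  by_cases hxj : x = j
  · simp [hxj, hi, hj]
  rw [Equiv.swap_apply_of_ne_of_ne hxi hxj]

theorem Finset.map_swap_of_notMem_of_mem (hi : i ∉ s) (hj : j ∈ s) :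
    s.map (Equiv.swap i j).toEmbedding = insert i (s.erase j) := by
  have hij : i ≠ j := fun h => hi (h ▸ hj)
  ext x
  rw [mem_map_equiv, Equiv.symm_swap, mem_insert, mem_erase]
  by_cases hxi : x = i
  · simp [hxi, hj]
  by_cases hxj : x = j
  · simp [hxj, hi, hij.symm]
  simp [Equiv.swap_apply_of_ne_of_ne hxi hxj, hxi, hxj]

theorem Finset.map_swap_map_swap :
    (s.map (Equiv.swap i j).toEmbedding).map (Equiv.swap i j).toEmbedding = s := by
  simp [map_map, ← Equiv.coe_trans]

end Swap

theorem hasMatching_of_map_mem {G M : Finset (Finset ℕ)} {t : ℕ} (σ : ℕ ≃ ℕ)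
    (hcard : M.card = t) (hdisj : (M : Set (Finset ℕ)).Pairwise fun e f => Disjoint e f)
    (hmap : ∀ e ∈ M, e.map σ.toEmbedding ∈ G) : HasMatching G t := by
  refine ⟨M.image (·.map σ.toEmbedding), image_subset_iff.2 hmap,
    by rw [card_image_of_injective _ (map_injective _), hcard], ?_⟩
  rw [coe_image, (map_injective _).injOn.pairwise_image]
  exact fun e he f hf hef => (disjoint_map _).2 (hdisj he hf hef)

section Compress

variable {G : Finset (Finset ℕ)} {i j : ℕ} {s : Finset ℕ}

theorem mem_compress :
    s ∈ compress G i j ↔ (s ∈ G ∧ ¬(j ∈ s ∧ i ∉ s ∧ insert i (s.erase j) ∉ G)) ∨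
      ∃ e, (e ∈ G ∧ j ∈ e ∧ i ∉ e ∧ insert i (e.erase j) ∉ G) ∧ insert i (e.erase j) = s := by
  simp only [compress, mem_union, mem_filter, mem_image]

theorem map_swap_mem_of_mem_compress_of_notMem (hs : s ∈ compress G i j) (hsG : s ∉ G) :
    i ∈ s ∧ s.map (Equiv.swap i j).toEmbedding ∈ G := by
  rcases mem_compress.1 hs with ⟨hsG', -⟩ | ⟨e, ⟨heG, hje, hie, -⟩, rfl⟩
  · exact absurd hsG' hsG
  refine ⟨mem_insert_self i _, ?_⟩
  rwa [← map_swap_of_notMem_of_mem hie hje, map_swap_map_swap]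

theorem mem_and_map_swap_mem_of_mem_compress (hs : s ∈ compress G i j) (hi : i ∉ s) :
    s ∈ G ∧ s.map (Equiv.swap i j).toEmbedding ∈ G := by
  rcases mem_compress.1 hs with ⟨hsG, hshift⟩ | ⟨e, -, -, rfl⟩
  · refine ⟨hsG, ?_⟩
    by_cases hj : j ∈ s
    · rw [map_swap_of_notMem_of_mem hi hj]
      by_contra h
      exact hshift ⟨hj, hi, h⟩
    · rwa [map_swap_of_notMem_of_notMem hi hj]
  · exact absurd (mem_insert_self i _) hi

end Compress

theorem compression_preserves_matching_free_general (t : ℕ)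
    (G : Finset (Finset ℕ))
    (hM : ¬HasMatching G t) (i j : ℕ) :
    ¬HasMatching (compress G i j) t := by
  rintro ⟨M, hMsub, hcard, hdisj⟩
  by_cases hMG : M ⊆ G
  · exact hM ⟨M, hMG, hcard, hdisj⟩
  obtain ⟨e₁, he₁M, he₁G⟩ := not_subset.1 hMG
  obtain ⟨hie₁, he₁swap⟩ := map_swap_mem_of_mem_compress_of_notMem (hMsub he₁M) he₁G
  refine hM (hasMatching_of_map_mem (Equiv.swap i j) hcard hdisj fun e hMe => ?_)
  by_cases he : e = e₁
  · exact he ▸ he₁swap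
  · have hie : i ∉ e := disjoint_left.1 (hdisj he₁M hMe (Ne.symm he)) hie₁
    exact (mem_and_map_swap_mem_of_mem_compress (hMsub hMe) hie).2

theorem compression_preserves_matching_free (n r t : ℕ) (hr : 2 ≤ r) (ht : 2 ≤ t)
    (G : Finset (Finset ℕ)) (hG : IsGraphOn n r G)
    (hM : ¬HasMatching G t) (i j : ℕ) :
    ¬HasMatching (compress G i j) t :=
  compression_preserves_matching_free_general t G hM i j
end

section
/- Let $r,t \ge 2$ be integers. Let $G$ be an $r$-graph on $[n]$ that contains no $t$ pairwise disjoint edges and contains no complete $r$-graph on $tr-1$ vertices. If vertices $i,j$ are contained together in some edge of $G$, then $\pi_{ij}(G)$ also contains no complete $r$-graph on $tr-1$ vertices. -/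
open Finset

/-!
Let `S` be a `(tr - 1)`-set spanning a clique of `π_ij(G)`. If `j ∈ S`, the compression created
no edge inside `S`: a new edge `e = f - j + i ⊆ S` comes from an `r`-set `f = e - i + j ⊆ S` that
was moved away, although `f` is itself an edge of the clique. So `S` spans a clique of `G`.
If `j ∉ S`, an edge `e ∈ G` through `i` and `j` meets `S` in at most `r - 1` vertices, so `S \ e`
has at least `(t - 1)r` vertices; its `r`-subsets avoid `i`, hence are edges of `G`, and `t - 1`
disjoint ones among them together with `e` form a matching of size `t`.
-/

def SpansClique (G : Finset (Finset ℕ)) (S : Finset ℕ) (r : ℕ) : Prop :=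
  ∀ e ⊆ S, #e = r → e ∈ G

section Compress

variable {G : Finset (Finset ℕ)} {i j : ℕ}

lemma mem_of_mem_compress_of_notMem {e : Finset ℕ} (h : e ∈ compress G i j) (hi : i ∉ e) :
    e ∈ G := by
  rcases mem_union.mp h with h | h
  · exact (mem_filter.mp h).1
  · obtain ⟨f, -, rfl⟩ := mem_image.mp h
    exact absurd (mem_insert_self i _) hi

lemma exists_of_mem_compress_of_notMem {e : Finset ℕ} (h : e ∈ compress G i j) (hG : e ∉ G) :
    ∃ f ∈ G, j ∈ f ∧ i ∉ f ∧ insert i (f.erase j) ∉ G ∧ insert i (f.erase j) = e := by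
  rcases mem_union.mp h with h | h
  · exact absurd (mem_filter.mp h).1 hG
  · obtain ⟨f, hf, rfl⟩ := mem_image.mp h
    obtain ⟨hfG, hjf, hif, hmoved⟩ := mem_filter.mp hf
    exact ⟨f, hfG, hjf, hif, hmoved, rfl⟩

lemma notMem_compress {f : Finset ℕ} (hj : j ∈ f) (hi : i ∉ f)
    (hG : insert i (f.erase j) ∉ G) : f ∉ compress G i j := by
  intro h
  rcases mem_union.mp h with h | h
  · exact (mem_filter.mp h).2 ⟨hj, hi, hG⟩
  · obtain ⟨g, -, rfl⟩ := mem_image.mp h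
    exact hi (mem_insert_self i _)

end Compress

namespace SpansClique

variable {G : Finset (Finset ℕ)} {S : Finset ℕ} {r i j : ℕ}

lemma mono {T : Finset ℕ} (hS : SpansClique G S r) (hT : T ⊆ S) : SpansClique G T r :=
  fun e he hr => hS e (he.trans hT) hr

lemma of_compress_of_notMem (hS : SpansClique (compress G i j) S r) (hi : i ∉ S) :
    SpansClique G S r :=
  fun e heS hr => mem_of_mem_compress_of_notMem (hS e heS hr) fun h => hi (heS h)

lemma of_compress_of_mem (hS : SpansClique (compress G i j) S r) (hj : j ∈ S) :
    SpansClique G S r := by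
  intro e heS hr
  by_contra heG
  obtain ⟨f, -, hjf, hif, hfG, rfl⟩ := exists_of_mem_compress_of_notMem (hS e heS hr) heG
  have hfS : f ⊆ S := by
    rw [← insert_erase hjf]
    exact insert_subset hj ((subset_insert i _).trans heS)
  have hfr : #f = r := by
    rw [← hr, card_insert_of_notMem fun h => hif (mem_of_mem_erase h), card_erase_add_one hjf]
  exact notMem_compress hjf hif hfG (hS f hfS hfr)

end SpansClique

lemma notMem_of_disjoint_of_forall_subset {M : Finset (Finset ℕ)} {A e : Finset ℕ}
    (hMA : ∀ f ∈ M, f ⊆ A) (heA : Disjoint e A) (he : e.Nonempty) : e ∉ M := fun h =>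
  he.ne_empty (disjoint_self.mp (disjoint_of_subset_right (hMA e h) heA))

lemma pairwise_disjoint_insert_of_disjoint {M : Finset (Finset ℕ)} {A e : Finset ℕ}
    (hM : (M : Set (Finset ℕ)).Pairwise Disjoint) (hMA : ∀ f ∈ M, f ⊆ A) (heA : Disjoint e A) :
    ((insert e M : Finset (Finset ℕ)) : Set (Finset ℕ)).Pairwise Disjoint := by
  rw [coe_insert, Set.pairwise_insert_of_symm]
  exact ⟨hM, fun f hf _ => disjoint_of_subset_right (hMA f hf) heA⟩

lemma exists_pairwise_disjoint_subset_powersetCard {r : ℕ} (hr : 0 < r) :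
    ∀ (k : ℕ) (A : Finset ℕ), k * r ≤ #A → ∃ M ⊆ A.powersetCard r, #M = k ∧
      (M : Set (Finset ℕ)).Pairwise Disjoint
  | 0, _, _ => ⟨∅, empty_subset _, rfl, by simp⟩
  | k + 1, A, hk => by
    rw [add_one_mul] at hk
    obtain ⟨e, heA, her⟩ := exists_subset_card_eq (show r ≤ #A by omega)
    obtain ⟨M, hMA, hMk, hM⟩ := exists_pairwise_disjoint_subset_powersetCard hr k (A \ e)
      (by rw [card_sdiff_of_subset heA, her]; omega)
    have hMA' : ∀ f ∈ M, f ⊆ A \ e := fun f hf => (mem_powersetCard.mp (hMA hf)).1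
    have heM : e ∉ M :=
      notMem_of_disjoint_of_forall_subset hMA' disjoint_sdiff (card_pos.mp (her ▸ hr))
    refine ⟨insert e M, insert_subset (mem_powersetCard.mpr ⟨heA, her⟩)
      (hMA.trans (powersetCard_mono sdiff_subset)), by rw [card_insert_of_notMem heM, hMk],
      pairwise_disjoint_insert_of_disjoint hM hMA' disjoint_sdiff⟩

lemma hasMatching_zero (G : Finset (Finset ℕ)) : HasMatching G 0 :=
  ⟨∅, empty_subset _, rfl, by simp⟩

lemma hasMatching_succ_of_spansClique {G : Finset (Finset ℕ)} {A e : Finset ℕ} {k r : ℕ}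
    (hr : 0 < r) (heG : e ∈ G) (he : e.Nonempty) (heA : Disjoint e A) (hA : SpansClique G A r)
    (hk : k * r ≤ #A) : HasMatching G (k + 1) := by
  obtain ⟨M, hMA, hMk, hM⟩ := exists_pairwise_disjoint_subset_powersetCard hr k A hk
  have hMA' : ∀ f ∈ M, f ⊆ A := fun f hf => (mem_powersetCard.mp (hMA hf)).1
  have hMG : M ⊆ G := fun f hf => hA f (hMA' f hf) (mem_powersetCard.mp (hMA hf)).2
  have heM : e ∉ M := notMem_of_disjoint_of_forall_subset hMA' heA he
  exact ⟨insert e M, insert_subset heG hMG, by rw [card_insert_of_notMem heM, hMk],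
    pairwise_disjoint_insert_of_disjoint hM hMA' heA⟩

lemma hasMatching_of_spansClique_compress {G : Finset (Finset ℕ)} {S e : Finset ℕ} {i j k r : ℕ}
    (heG : e ∈ G) (her : #e = r) (hie : i ∈ e) (hje : j ∈ e) (hjS : j ∉ S)
    (hS : #S = (k + 1) * r - 1) (hSc : SpansClique (compress G i j) S r) :
    HasMatching G (k + 1) := by
  have hr : 0 < r := her ▸ card_pos.mpr ⟨i, hie⟩
  have hmeet : #(e ∩ S) < r :=
    her ▸ card_lt_card ⟨inter_subset_left, fun h => hjS (mem_of_mem_inter_right (h hje))⟩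
  have hclique : SpansClique G (S \ e) r :=
    (hSc.mono sdiff_subset).of_compress_of_notMem fun h => (mem_sdiff.mp h).2 hie
  refine hasMatching_succ_of_spansClique hr heG ⟨i, hie⟩ disjoint_sdiff hclique ?_
  rw [card_sdiff, hS, add_one_mul]
  omega

theorem compression_preserves_clique_free_general (n r t : ℕ)
    (G : Finset (Finset ℕ)) (hG : IsGraphOn n r G)
    (hM : ¬HasMatching G t) (hK : ¬HasClique G (t*r - 1) r)
    (i j : ℕ) (he : ∃ e ∈ G, i ∈ e ∧ j ∈ e) :
    ¬HasClique (compress G i j) (t*r - 1) r := by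
  obtain ⟨e, heG, hie, hje⟩ := he
  obtain ⟨k, rfl⟩ : ∃ k, t = k + 1 :=
    Nat.exists_eq_succ_of_ne_zero fun ht => hM (ht ▸ hasMatching_zero G)
  rintro ⟨S, hS, hSc⟩
  by_cases hjS : j ∈ S
  · exact hK ⟨S, hS, SpansClique.of_compress_of_mem hSc hjS⟩
  · exact hM (hasMatching_of_spansClique_compress heG (hG e heG).2 hie hje hjS hS hSc)

theorem compression_preserves_clique_free (n r t : ℕ) (hr : 2 ≤ r) (ht : 2 ≤ t)
    (G : Finset (Finset ℕ)) (hG : IsGraphOn n r G)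
    (hM : ¬HasMatching G t) (hK : ¬HasClique G (t*r - 1) r)
    (i j : ℕ) (he : ∃ e ∈ G, i ∈ e ∧ j ∈ e) :
    ¬HasClique (compress G i j) (t*r - 1) r :=
  compression_preserves_clique_free_general n r t G hG hM hK i j he
end

section
/- Let $0<a<1$ and $s\ge2$ an integer, and set $\mu = \frac{s^2-3s+2}{6s^2}$. Then $\frac{1}{2}a(1-a)^2 + \mu(1-a)^3 \le \frac{2s^4}{3(2s^2+3s-2)^2}$. -/
open Finset

theorem twenty_seven_mul_sq_mul_le_two_mul_add_pow_three {x y : ℝ} (hx : 0 ≤ x) (hy : 0 ≤ y) :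
    27 * (x ^ 2 * y) ≤ (2 * x + y) ^ 3 := by
  -- (2x + y)³ - 27x²y = (x - y)²(8x + y)
  nlinarith [mul_nonneg (sq_nonneg (x - y)) (by linarith : 0 ≤ 8 * x + y)]

/-- AM–GM applied to `c (1 - a)`, `c (1 - a)` and `2 (μ + c a)`, whose sum `2 (c + μ)` does not
depend on `a`. -/
theorem sq_one_sub_mul_add_mul_le {a c μ : ℝ} (ha0 : 0 ≤ a) (ha1 : a ≤ 1) (hc : 0 ≤ c)
    (hμ : 0 ≤ μ) :
    27 * c ^ 2 * ((1 - a) ^ 2 * (μ + c * a)) ≤ 4 * (c + μ) ^ 3 := by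
  have h := twenty_seven_mul_sq_mul_le_two_mul_add_pow_three (x := c * (1 - a))
    (y := 2 * (μ + c * a)) (mul_nonneg hc (by linarith)) (by positivity)
  calc 27 * c ^ 2 * ((1 - a) ^ 2 * (μ + c * a))
        = 27 * ((c * (1 - a)) ^ 2 * (2 * (μ + c * a))) / 2 := by ring
    _ ≤ (2 * (c * (1 - a)) + 2 * (μ + c * a)) ^ 3 / 2 := by gcongr
    _ = 4 * (c + μ) ^ 3 := by ring

theorem amgm_optimization_step (a : ℝ) (ha : 0 < a) (ha1 : a < 1)
    (s : ℕ) (hs : 2 ≤ s) :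
    (1/2)*a*(1-a)^2 + (((s:ℝ)^2 - 3*(s:ℝ) + 2)/(6*(s:ℝ)^2))*(1-a)^3
      ≤ 2*(s:ℝ)^4 / (3*(2*(s:ℝ)^2 + 3*(s:ℝ) - 2)^2) := by
  have hs2 : (2 : ℝ) ≤ s := by exact_mod_cast hs
  set μ : ℝ := ((s:ℝ)^2 - 3*(s:ℝ) + 2)/(6*(s:ℝ)^2) with hμ_def
  set c : ℝ := (2*(s:ℝ)^2 + 3*(s:ℝ) - 2)/(6*(s:ℝ)^2) with hc_def
  have hμ : 0 ≤ μ := div_nonneg (by nlinarith) (by positivity)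
  have hc : 0 < c := div_pos (by nlinarith) (by positivity)
  have hsum : c + μ = 1 / 2 := by rw [hc_def, hμ_def]; field_simp; ring
  have key := sq_one_sub_mul_add_mul_le ha.le ha1.le hc.le hμ
  rw [hsum] at key
  calc (1/2)*a*(1-a)^2 + μ*(1-a)^3 = (1 - a) ^ 2 * (μ + c * a) := by
        rw [show μ = 1 / 2 - c by linarith]; ring
    _ ≤ 1 / (54 * c ^ 2) := by rw [le_div_iff₀ (by positivity)]; linarith
    _ = 2*(s:ℝ)^4 / (3*(2*(s:ℝ)^2 + 3*(s:ℝ) - 2)^2) := by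
        have : 2*(s:ℝ)^2 + 3*(s:ℝ) - 2 ≠ 0 := by nlinarith
        rw [hc_def]; field_simp; ring
end

section
/- Let $n,t$ be positive integers with $t\ge2$ and $n\ge 2t$. Let $G$ be a graph on $[n]$ with no matching of size $t$ that is left-compressed relative to the natural order (i.e., $\pi_{ij}(G)=G$ for all $i<j$: whenever $\{j,k\}\in G$, $i<j$ and $i\ne k$, we have $\{i,k\}\in G$). Then there exists $\ell\in\{0,1,\dots,t-1\}$ such that $G \subseteq F_{t,\ell}(n)$, where $F_{t,\ell}(n) = \binom{[2t-1-\ell]}{2} \cup \{\{a,b\} : a\in\{1,\dots,\ell\},\ b\in\{2t-\ell,\dots,n\}\}$. -/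
open Finset

/-- `G` is left-compressed relative to the natural order on `[n]`. -/
def LeftCompressed (n : ℕ) (G : Finset (Finset ℕ)) : Prop :=
  ∀ i j, 1 ≤ i → i < j → j ≤ n → ∀ e ∈ G, j ∈ e → i ∉ e → insert i (e.erase j) ∈ G

/-- The graph `F_{t,ℓ}(n)`: a clique on `[2t-1-ℓ]` plus the complete bipartite
graph between `[ℓ]` and `{2t-ℓ,…,n}`. -/
def Fgraph (t ℓ n : ℕ) : Finset (Finset ℕ) :=
  ((Finset.Icc 1 (2*t - 1 - ℓ)).powersetCard 2) ∪
  (((Finset.Icc 1 ℓ) ×ˢ (Finset.Icc (2*t - ℓ) n)).image fun p => {p.1, p.2})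

lemma lc_step (n : ℕ) (G : Finset (Finset ℕ)) (hc : LeftCompressed n G)
    (a b c : ℕ) (hab : ({a, b} : Finset ℕ) ∈ G) (hne : a ≠ b)
    (h1c : 1 ≤ c) (hcb : c < b) (hbn : b ≤ n) (hca : c ≠ a) :
    ({a, c} : Finset ℕ) ∈ G := by
  have h := hc c b h1c hcb hbn _ hab (by simp)
    (by simp only [Finset.mem_insert, Finset.mem_singleton]; push_neg
        exact ⟨hca, Nat.ne_of_lt hcb⟩)
  have he : ({a, b} : Finset ℕ).erase b = {a} := by
    ext x
    simp only [Finset.mem_erase, Finset.mem_insert, Finset.mem_singleton]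
    constructor
    · rintro ⟨hx, h | h⟩
      · exact h
      · exact absurd h hx
    · rintro rfl; exact ⟨hne, Or.inl rfl⟩
  rw [he] at h
  rwa [Finset.pair_comm] at h

lemma lc_closure (n : ℕ) (G : Finset (Finset ℕ)) (hc : LeftCompressed n G)
    (a b c d : ℕ) (hab : ({a, b} : Finset ℕ) ∈ G) (hlt : a < b) (hbn : b ≤ n)
    (h1c : 1 ≤ c) (hca : c ≤ a) (hcd : c < d) (hdb : d ≤ b) :
    ({c, d} : Finset ℕ) ∈ G := by
  rcases eq_or_lt_of_le hdb with rfl | hdb'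
  · -- d = b
    rcases eq_or_lt_of_le hca with rfl | hca'
    · exact hab
    · rw [Finset.pair_comm] at hab
      have := lc_step n G hc d a c hab (Nat.ne_of_gt hlt) h1c hca'
        (le_of_lt (lt_of_lt_of_le hlt hbn)) (Nat.ne_of_lt hcd)
      rwa [Finset.pair_comm] at this
  · -- d < b
    by_cases hda : d = a
    · subst hda
      have hcb : c < b := lt_trans hcd hdb'
      have := lc_step n G hc d b c hab (Nat.ne_of_lt hlt) h1c hcb hbn
        (Nat.ne_of_lt hcd)
      rwa [Finset.pair_comm] at this
    · have h1 : ({a, d} : Finset ℕ) ∈ G :=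
        lc_step n G hc a b d hab (Nat.ne_of_lt hlt) (by omega) hdb' hbn hda
      rcases eq_or_lt_of_le hca with rfl | hca'
      · exact h1
      · rw [Finset.pair_comm] at h1
        have had : d ≠ a := hda
        have := lc_step n G hc d a c h1 had h1c hca'
          (le_of_lt (lt_of_lt_of_le hlt hbn)) (Nat.ne_of_lt hcd)
        rwa [Finset.pair_comm] at this

lemma edge_in_F (n t ℓ : ℕ) (ht : 2 ≤ t) (G : Finset (Finset ℕ))
    (hc : LeftCompressed n G) (hℓt : ℓ < t)
    (hℓ : ({ℓ + 1, 2 * t - ℓ} : Finset ℕ) ∉ G)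
    (a b : ℕ) (hab : a < b) (h1a : 1 ≤ a) (hbn : b ≤ n)
    (he : ({a, b} : Finset ℕ) ∈ G) : ({a, b} : Finset ℕ) ∈ Fgraph t ℓ n := by
  by_cases hb : b ≤ 2 * t - 1 - ℓ
  · apply Finset.mem_union_left
    rw [Finset.mem_powersetCard]
    refine ⟨?_, Finset.card_pair (Nat.ne_of_lt hab)⟩
    intro x hx
    simp only [Finset.mem_insert, Finset.mem_singleton] at hx
    rw [Finset.mem_Icc]
    omega
  · have hb2 : 2 * t - ℓ ≤ b := by omega
    have haℓ : a ≤ ℓ := by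
      by_contra h
      push_neg at h
      exact hℓ (lc_closure n G hc a b (ℓ + 1) (2 * t - ℓ) he hab hbn
        (by omega) (by omega) (by omega) hb2)
    apply Finset.mem_union_right
    rw [Finset.mem_image]
    refine ⟨(a, b), ?_, rfl⟩
    rw [Finset.mem_product, Finset.mem_Icc, Finset.mem_Icc]
    omega

theorem left_compressed_matching_free_structure (n t : ℕ) (ht : 2 ≤ t)
    (hn : 2*t ≤ n) (G : Finset (Finset ℕ)) (hG : IsGraphOn n 2 G)
    (hM : ¬HasMatching G t) (hc : LeftCompressed n G) :
    ∃ ℓ ≤ t - 1, G ⊆ Fgraph t ℓ n := by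
  by_cases hall : ∀ i < t, ({i + 1, 2 * t - i} : Finset ℕ) ∈ G
  · exfalso
    apply hM
    refine ⟨(Finset.range t).image (fun i => ({i + 1, 2 * t - i} : Finset ℕ)),
      ?_, ?_, ?_⟩
    · intro x hx
      rw [Finset.mem_image] at hx
      obtain ⟨i, hi, rfl⟩ := hx
      exact hall i (Finset.mem_range.mp hi)
    · rw [Finset.card_image_of_injOn, Finset.card_range]
      intro i hi j hj h
      simp only [Finset.coe_range, Set.mem_Iio] at hi hj
      have h' : ({i + 1, 2 * t - i} : Finset ℕ) = {j + 1, 2 * t - j} := h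
      have h1 : (i + 1) ∈ ({j + 1, 2 * t - j} : Finset ℕ) := by rw [← h']; simp
      simp only [Finset.mem_insert, Finset.mem_singleton] at h1
      omega
    · intro x hx y hy hxy
      simp only [Finset.coe_image, Set.mem_image, Finset.mem_coe,
        Finset.mem_range] at hx hy
      obtain ⟨i, hi, rfl⟩ := hx
      obtain ⟨j, hj, rfl⟩ := hy
      have hij : i ≠ j := fun h => hxy (by rw [h])
      rw [Finset.disjoint_left]
      intro z hz hz'
      simp only [Finset.mem_insert, Finset.mem_singleton] at hz hz'
      omega
  · push_neg at hall
    obtain ⟨ℓ, hℓt, hℓ⟩ := hall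
    refine ⟨ℓ, by omega, ?_⟩
    intro e he
    obtain ⟨hsub, hcard⟩ := hG e he
    obtain ⟨a, b, hab, rfl⟩ := Finset.card_eq_two.mp hcard
    have hamem : a ∈ Finset.Icc 1 n := hsub (by simp)
    have hbmem : b ∈ Finset.Icc 1 n := hsub (by simp)
    rw [Finset.mem_Icc] at hamem hbmem
    rcases lt_or_gt_of_ne hab with h | h
    · exact edge_in_F n t ℓ ht G hc hℓt hℓ a b h hamem.1 hbmem.2 he
    · rw [Finset.pair_comm] at he ⊢
      exact edge_in_F n t ℓ ht G hc hℓt hℓ b a h hbmem.1 hamem.2 he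
end

section
/- Let $n,t$ be positive integers with $t\ge2$, $n\ge2t$, and let $0<b\le 1/t$. For each $\ell\in\{1,\dots,t-1\}$, the $b$-bounded Lagrangian of the graph $F_{t,\ell}(n)$ satisfies $\lambda_b(F_{t,\ell}(n)) \le \binom{2t-1-2\ell}{2}b^2 + \ell b - \frac{\ell^2+\ell}{2}b^2$. -/
open Finset

/-- The `b`-bounded Lagrangian (equals `0` if no `b`-bounded feasible vector exists,
since `sSup ∅ = 0` in `ℝ`). -/
noncomputable def lagB (n : ℕ) (b : ℝ) (G : Finset (Finset ℕ)) : ℝ :=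
  sSup {v : ℝ | ∃ x : ℕ → ℝ, IsFeasible n x ∧ (∀ i, x i ≤ b) ∧ lagPoly G x = v}

/-!
Split the vertices into `A = [ℓ]`, `B = {ℓ+1, …, 2t-1-ℓ}` and the rest `C`. Since `A ∪ B` is a
clique and `A` is joined to all of `C`, the Lagrangian is `e₂(A) + e₂(B) + a(1 - a)`, where `a` is
the weight of `A` and `e₂` is the sum of products over pairs. Each pair of `B` contributes at most
`b²`, while Cauchy–Schwarz gives `e₂(A) ≤ (ℓ - 1)a²/(2ℓ)`, so the remaining part is at most
`a - (ℓ + 1)a²/(2ℓ)`, which increases on `a ≤ ℓb ≤ ℓ/(ℓ + 1)` and is maximal at `a = ℓb`.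
-/

namespace Finset

section PairSums

variable {ι R : Type*}

theorem sum_powersetCard_two_le [CommSemiring R] [PartialOrder R] [IsOrderedRing R]
    {s : Finset ι} {x : ι → R} {b : R} (h0 : ∀ i ∈ s, 0 ≤ x i) (hb : ∀ i ∈ s, x i ≤ b) :
    ∑ e ∈ s.powersetCard 2, ∏ i ∈ e, x i ≤ (#s).choose 2 * b ^ 2 := by
  have hterm : ∀ e ∈ s.powersetCard 2, ∏ i ∈ e, x i ≤ b ^ 2 := fun e he => by
    obtain ⟨hes, hcard⟩ := mem_powersetCard.mp he
    calc ∏ i ∈ e, x i ≤ ∏ _i ∈ e, b :=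
          prod_le_prod (fun i hi => h0 i (hes hi)) fun i hi => hb i (hes hi)
      _ = b ^ 2 := by rw [prod_const, hcard]
  simpa [card_powersetCard, nsmul_eq_mul] using sum_le_card_nsmul _ _ _ hterm

variable [DecidableEq ι]

theorem sum_powersetCard_two_insert [CommSemiring R] {a : ι} {s : Finset ι} (ha : a ∉ s)
    (x : ι → R) :
    ∑ e ∈ (insert a s).powersetCard 2, ∏ i ∈ e, x i
      = ∑ e ∈ s.powersetCard 2, ∏ i ∈ e, x i + x a * ∑ i ∈ s, x i := by
  have hnot : ∀ e ∈ s.powersetCard 1, a ∉ e := fun e he h =>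
    ha ((mem_powersetCard.mp he).1 h)
  have hdisj : Disjoint (s.powersetCard 2) ((s.powersetCard 1).image (insert a)) := by
    refine disjoint_left.mpr fun e he he' => ?_
    obtain ⟨f, -, rfl⟩ := mem_image.mp he'
    exact ha ((mem_powersetCard.mp he).1 (mem_insert_self a f))
  have hinj : Set.InjOn (insert a) (s.powersetCard 1 : Set (Finset ι)) := fun e he f hf hef => by
    rw [← erase_insert (hnot e he), ← erase_insert (hnot f hf), hef]
  rw [powersetCard_succ_insert ha, sum_union hdisj, sum_image hinj,
    sum_congr rfl fun e he => prod_insert (hnot e he), ← mul_sum, powersetCard_one, sum_map]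
  simp

theorem sum_powersetCard_two_union [CommSemiring R] {s u : Finset ι} (h : Disjoint s u)
    (x : ι → R) :
    ∑ e ∈ (s ∪ u).powersetCard 2, ∏ i ∈ e, x i
      = ∑ e ∈ s.powersetCard 2, ∏ i ∈ e, x i + ∑ e ∈ u.powersetCard 2, ∏ i ∈ e, x i
        + (∑ i ∈ s, x i) * ∑ i ∈ u, x i := by
  induction s using Finset.induction_on with
  | empty => simp [powersetCard_eq_empty.mpr (show #(∅ : Finset ι) < 2 by simp)]
  | @insert a s ha ih =>
    have hau : a ∉ s ∪ u := by
      simp only [mem_union, not_or]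
      exact ⟨ha, disjoint_left.mp h (mem_insert_self a s)⟩
    rw [insert_union, sum_powersetCard_two_insert hau, ih (disjoint_of_subset_left
      (subset_insert a s) h), sum_powersetCard_two_insert ha, sum_insert ha, sum_union
      (disjoint_of_subset_left (subset_insert a s) h)]
    ring

theorem two_mul_sum_powersetCard_two [CommRing R] (s : Finset ι) (x : ι → R) :
    2 * ∑ e ∈ s.powersetCard 2, ∏ i ∈ e, x i = (∑ i ∈ s, x i) ^ 2 - ∑ i ∈ s, x i ^ 2 := by
  induction s using Finset.induction_on with
  | empty => simp [powersetCard_eq_empty.mpr (show #(∅ : Finset ι) < 2 by simp)]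
  | @insert a s ha ih =>
    rw [sum_powersetCard_two_insert ha, sum_insert ha, sum_insert ha, mul_add, ih]
    ring

theorem two_mul_card_mul_sum_powersetCard_two_le [CommRing R] [LinearOrder R]
    [IsStrictOrderedRing R] (s : Finset ι) (x : ι → R) :
    2 * #s * ∑ e ∈ s.powersetCard 2, ∏ i ∈ e, x i ≤ (#s - 1) * (∑ i ∈ s, x i) ^ 2 := by
  rw [mul_assoc, mul_left_comm, two_mul_sum_powersetCard_two]
  nlinarith [sq_sum_le_card_mul_sum_sq (s := s) (f := x)]

theorem sum_image_pair_product [CommSemiring R] {s u : Finset ι} (h : Disjoint s u)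
    (x : ι → R) :
    ∑ e ∈ (s ×ˢ u).image (fun p => ({p.1, p.2} : Finset ι)), ∏ i ∈ e, x i
      = (∑ i ∈ s, x i) * ∑ j ∈ u, x j := by
  have hne : ∀ p ∈ s ×ˢ u, p.1 ≠ p.2 := fun p hp =>
    disjoint_iff_ne.mp h _ (mem_product.mp hp).1 _ (mem_product.mp hp).2
  have hinj : Set.InjOn (fun p : ι × ι => ({p.1, p.2} : Finset ι)) (s ×ˢ u : Finset _) := by
    rintro ⟨a, b⟩ hab ⟨c, d⟩ hcd hpair
    simp only [coe_product, Set.mem_prod, mem_coe] at hab hcd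
    have ha : a ∈ ({c, d} : Finset ι) := by simp [← hpair]
    have hb : b ∈ ({c, d} : Finset ι) := by simp [← hpair]
    simp only [mem_insert, mem_singleton] at ha hb
    have had : a ≠ d := disjoint_iff_ne.mp h _ hab.1 _ hcd.2
    have hcb : c ≠ b := disjoint_iff_ne.mp h _ hcd.1 _ hab.2
    simp only [Prod.mk.injEq]
    tauto
  rw [sum_image hinj, sum_product, sum_mul_sum]
  exact sum_congr rfl fun i hi => sum_congr rfl fun j hj =>
    prod_pair (hne (i, j) (mem_product.mpr ⟨hi, hj⟩))

end PairSums

end Finset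

theorem add_mul_one_sub_le {L a b e : ℝ} (hL : 0 < L) (ha : a ≤ L * b)
    (hLb : (L + 1) * b ≤ 1) (he : 2 * L * e ≤ (L - 1) * a ^ 2) :
    e + a * (1 - a) ≤ L * b - (L ^ 2 + L) / 2 * b ^ 2 := by
  -- `a ↦ a - (L + 1) / (2 * L) * a ^ 2` is increasing up to `L / (L + 1) ≥ L * b`
  have hmono : 0 ≤ (L * b - a) * (2 * L - (L + 1) * (L * b + a)) :=
    mul_nonneg (by linarith) (by nlinarith)
  nlinarith

section Fgraph

variable {t ℓ n : ℕ}

theorem lagPoly_Fgraph (hℓ : ℓ < t) (x : ℕ → ℝ) :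
    lagPoly (Fgraph t ℓ n) x
      = ∑ e ∈ (Ioc 0 (2 * t - 1 - ℓ)).powersetCard 2, ∏ i ∈ e, x i
        + (∑ i ∈ Ioc 0 ℓ, x i) * ∑ i ∈ Ioc (2 * t - 1 - ℓ) n, x i := by
  have hIcc : ∀ p, Icc 1 p = Ioc 0 p := fun p => Icc_add_one_left_eq_Ioc 0 p
  have hC : Icc (2 * t - ℓ) n = Ioc (2 * t - 1 - ℓ) n := by
    rw [← Icc_add_one_left_eq_Ioc]; congr 1; omega
  have hdisj : Disjoint ((Ioc 0 (2 * t - 1 - ℓ)).powersetCard 2)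
      ((Ioc 0 ℓ ×ˢ Ioc (2 * t - 1 - ℓ) n).image fun p => ({p.1, p.2} : Finset ℕ)) := by
    refine disjoint_left.mpr fun e he he' => ?_
    obtain ⟨p, hp, rfl⟩ := mem_image.mp he'
    have h1 := (mem_powersetCard.mp he).1 (mem_insert_of_mem (mem_singleton_self p.2))
    have h2 := (mem_product.mp hp).2
    simp only [mem_Ioc] at h1 h2
    omega
  rw [lagPoly, Fgraph, hIcc, hIcc, hC, sum_union hdisj,
    sum_image_pair_product (Ioc_disjoint_Ioc_of_le (by omega))]

theorem lagPoly_Fgraph_le (hℓ1 : 1 ≤ ℓ) (hℓt : ℓ < t) (hn : 2 * t ≤ n) {b : ℝ}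
    (hℓb : (ℓ + 1) * b ≤ 1) {x : ℕ → ℝ} (hx : IsFeasible n x) (hxb : ∀ i, x i ≤ b) :
    lagPoly (Fgraph t ℓ n) x
      ≤ (((2 * t - 1 - 2 * ℓ).choose 2 : ℕ) : ℝ) * b ^ 2 + ℓ * b
        - (((ℓ : ℝ) ^ 2 + ℓ) / 2) * b ^ 2 := by
  set m := 2 * t - 1 - ℓ
  have hℓm : ℓ ≤ m := by omega
  have hAB : Ioc 0 m = Ioc 0 ℓ ∪ Ioc ℓ m := (Ioc_union_Ioc_eq_Ioc (Nat.zero_le ℓ) hℓm).symm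
  have hdAB : Disjoint (Ioc 0 ℓ) (Ioc ℓ m) := Ioc_disjoint_Ioc_of_le le_rfl
  set a := ∑ i ∈ Ioc 0 ℓ, x i
  set β := ∑ i ∈ Ioc ℓ m, x i
  set c := ∑ i ∈ Ioc m n, x i
  have htotal : a + β + c = 1 := by
    rw [← hx.2, show Icc 1 n = Ioc 0 n from Icc_add_one_left_eq_Ioc 0 n, ← sum_union hdAB,
      ← hAB, ← sum_union (Ioc_disjoint_Ioc_of_le le_rfl),
      Ioc_union_Ioc_eq_Ioc (Nat.zero_le m) (by omega)]
  have hcardA : (#(Ioc 0 ℓ) : ℝ) = ℓ := by simp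
  have hcardB : #(Ioc ℓ m) = 2 * t - 1 - 2 * ℓ := by simp only [Nat.card_Ioc]; omega
  have hB : ∑ e ∈ (Ioc ℓ m).powersetCard 2, ∏ i ∈ e, x i
      ≤ (((2 * t - 1 - 2 * ℓ).choose 2 : ℕ) : ℝ) * b ^ 2 := by
    simpa [hcardB] using
      sum_powersetCard_two_le (s := Ioc ℓ m) (fun i _ => hx.1 i) fun i _ => hxb i
  have hA : ∑ e ∈ (Ioc 0 ℓ).powersetCard 2, ∏ i ∈ e, x i + a * (1 - a)
      ≤ ℓ * b - (((ℓ : ℝ) ^ 2 + ℓ) / 2) * b ^ 2 := by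
    refine add_mul_one_sub_le (by exact_mod_cast hℓ1) ?_ hℓb ?_
    · simpa [nsmul_eq_mul] using sum_le_card_nsmul (Ioc 0 ℓ) x b fun i _ => hxb i
    · simpa [hcardA] using two_mul_card_mul_sum_powersetCard_two_le (Ioc 0 ℓ) x
  have hcross : a * β + a * c = a * (1 - a) := by rw [← htotal]; ring
  rw [lagPoly_Fgraph hℓt, hAB, sum_powersetCard_two_union hdAB]
  linarith

end Fgraph

theorem bounded_lagrangian_Fgraph_general (n t ℓ : ℕ) (hn : 2*t ≤ n)
    (hℓ1 : 1 ≤ ℓ) (hℓ : ℓ ≤ t - 1) (b : ℝ) (hb : 0 < b) (hbt : b ≤ 1/(t:ℝ)) :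
    lagB n b (Fgraph t ℓ n)
      ≤ (((2*t - 1 - 2*ℓ).choose 2 : ℕ) : ℝ) * b^2 + (ℓ:ℝ) * b
        - (((ℓ:ℝ)^2 + (ℓ:ℝ))/2) * b^2 := by
  have hℓt : ℓ < t := by omega
  have hℓb : ((ℓ : ℝ) + 1) * b ≤ 1 := by
    rw [le_div_iff₀ (by exact_mod_cast (show 0 < t by omega))] at hbt
    have : (ℓ : ℝ) + 1 ≤ t := by exact_mod_cast hℓt
    nlinarith
  refine Real.sSup_le ?_ ?_
  · rintro _ ⟨x, hx, hxb, rfl⟩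
    exact lagPoly_Fgraph_le hℓ1 hℓt hn hℓb hx hxb
  · have hℓb0 : (0 : ℝ) ≤ ℓ * b := by positivity
    have : (0 : ℝ) ≤ (((2*t - 1 - 2*ℓ).choose 2 : ℕ) : ℝ) * b^2 := by positivity
    nlinarith

theorem bounded_lagrangian_Fgraph (n t ℓ : ℕ) (ht : 2 ≤ t) (hn : 2*t ≤ n)
    (hℓ1 : 1 ≤ ℓ) (hℓ : ℓ ≤ t - 1) (b : ℝ) (hb : 0 < b) (hbt : b ≤ 1/(t:ℝ)) :
    lagB n b (Fgraph t ℓ n)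
      ≤ (((2*t - 1 - 2*ℓ).choose 2 : ℕ) : ℝ) * b^2 + (ℓ:ℝ) * b
        - (((ℓ:ℝ)^2 + (ℓ:ℝ))/2) * b^2 :=
  bounded_lagrangian_Fgraph_general n t ℓ hn hℓ1 hℓ b hb hbt
end

section
/- Let $r,t\ge2$ and let $G$ be an $r$-graph on at least $t(r-1)+1$ vertices such that every pair of vertices is contained in some edge and $G$ contains no linear star $L^r_t$ (t edges sharing exactly one common vertex, pairwise disjoint otherwise). Then for every vertex $x$, the link $L(x)=\{e\setminus\{x\} : x\in e\in G\}$ contains no complete $(r-1)$-graph on $t(r-1)-1$ vertices. In particular, $G$ contains no complete $r$-graph on $t(r-1)$ vertices. -/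
open Finset

/-- `G` contains no `r`-uniform linear star of size `t`: `t` edges through a common
vertex `x`, pairwise disjoint outside `x`. -/
def LinearStarFree (G : Finset (Finset ℕ)) (t : ℕ) : Prop :=
  ¬∃ (x : ℕ) (M : Finset (Finset ℕ)), M ⊆ G ∧ M.card = t ∧ (∀ e ∈ M, x ∈ e) ∧
    (M : Set (Finset ℕ)).Pairwise fun e f => e ∩ f = {x}

/-!
Suppose the link of `x` contains a complete `(r-1)`-graph on a set `S` with
`|S| = t(r-1) - 1`. Since there are more than `|S| + 1` vertices, some `y` lies outside
`S ∪ {x}`, and an edge `e` covers the pair `x, y`. It meets `S` in at most `r - 2` vertices,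
so `S \ e` still contains `t - 1` disjoint `(r-1)`-sets; adding `x` to each of them gives
link edges which together with `e` form a linear star `L^r_t` centred at `x`.
A complete `r`-graph on `t(r-1)` vertices contains such a link clique at any of its vertices.
-/

section LinearStar

variable {α : Type*} [DecidableEq α]

theorem Finset.exists_pairwiseDisjoint_subsets_card_eq {m : ℕ} (hm : m ≠ 0) (k : ℕ)
    {T : Finset α} (hT : k * m ≤ #T) :
    ∃ M : Finset (Finset α), #M = k ∧ (∀ f ∈ M, f ⊆ T ∧ #f = m) ∧
      (M : Set (Finset α)).PairwiseDisjoint id := by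
  induction k generalizing T with
  | zero => exact ⟨∅, by simp⟩
  | succ k ih =>
    obtain ⟨f, hfT, hfm⟩ :=
      exists_subset_card_eq (le_trans (Nat.le_mul_of_pos_left m k.succ_pos) hT)
    obtain ⟨M, hMk, hMT, hMd⟩ := ih (T := T \ f) (by
      rw [card_sdiff_of_subset hfT, hfm]
      rw [Nat.succ_mul] at hT
      omega)
    have hdisj : ∀ g ∈ M, Disjoint f g := fun g hg =>
      disjoint_of_subset_right (hMT g hg).1 disjoint_sdiff
    have hfM : f ∉ M := fun hf => by
      obtain ⟨a, ha⟩ := card_ne_zero.mp (hfm ▸ hm)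
      exact disjoint_left.mp (hdisj f hf) ha ha
    refine ⟨insert f M, by rw [card_insert_of_notMem hfM, hMk], ?_, ?_⟩
    · simp only [mem_insert, forall_eq_or_imp]
      exact ⟨⟨hfT, hfm⟩, fun g hg => ⟨(hMT g hg).1.trans sdiff_subset, (hMT g hg).2⟩⟩
    · rw [coe_insert]
      exact hMd.insert fun g hg _ => hdisj g hg

def IsLinearStar (x : α) (M : Finset (Finset α)) : Prop :=
  (∀ e ∈ M, x ∈ e) ∧ (M : Set (Finset α)).Pairwise fun e f => e ∩ f = {x}

variable {x : α} {e : Finset α} {M : Finset (Finset α)}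

theorem inter_insert_eq_singleton {f : Finset α} (hxe : x ∈ e) (hef : Disjoint e f) :
    e ∩ insert x f = {x} := by
  rw [inter_insert_of_mem hxe, disjoint_iff_inter_eq_empty.mp hef, insert_empty_eq]

theorem isLinearStar_image_insert (hM : (M : Set (Finset α)).PairwiseDisjoint id) :
    IsLinearStar x (M.image (insert x)) := by
  refine ⟨by simp, ?_⟩
  simp only [coe_image]
  rintro _ ⟨f, hf, rfl⟩ _ ⟨g, hg, rfl⟩ hfg
  have hfg : Disjoint f g := hM hf hg fun h => hfg (h ▸ rfl)
  rw [← insert_inter_distrib, disjoint_iff_inter_eq_empty.mp hfg, insert_empty_eq]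

theorem IsLinearStar.insert (hM : IsLinearStar x M) (hxe : x ∈ e)
    (he : ∀ f ∈ M, e ∩ f = {x}) : IsLinearStar x (insert e M) := by
  refine ⟨by simpa [hxe] using hM.1, ?_⟩
  rw [coe_insert]
  exact hM.2.insert fun f hf _ => ⟨he f hf, by rw [inter_comm, he f hf]⟩

theorem card_insert_image_insert (hx : ∀ f ∈ M, x ∉ f)
    (he : ∀ f ∈ M, f.Nonempty ∧ Disjoint e f) :
    #(insert e (M.image (insert x))) = #M + 1 := by
  have hinj : Set.InjOn (insert x) (M : Set (Finset α)) := fun f hf g hg hfg => by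
    rw [← erase_insert (hx f hf), ← erase_insert (hx g hg), hfg]
  have heM : e ∉ M.image (insert x) := by
    rintro hmem
    obtain ⟨f, hf, rfl⟩ := mem_image.mp hmem
    obtain ⟨⟨a, ha⟩, hdisj⟩ := he f hf
    exact disjoint_left.mp hdisj (mem_insert_of_mem ha) ha
  rw [card_insert_of_notMem heM, card_image_of_injOn hinj]

end LinearStar

theorem insert_mem_of_forall_card_eq_mem {G : Finset (Finset ℕ)} {r : ℕ} {S : Finset ℕ}
    (hS : ∀ e ⊆ S, #e = r → e ∈ G) {x : ℕ} (hx : x ∈ S) (hr : 1 ≤ r) :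
    ∀ f ⊆ S.erase x, #f = r - 1 → insert x f ∈ G := fun f hf hfr =>
  hS _ (insert_subset hx (hf.trans (erase_subset x S)))
    (by rw [card_insert_of_notMem fun h => notMem_erase x S (hf h)]; omega)

theorem not_forall_insert_mem_of_linearStarFree {n r t : ℕ} (hr : 2 ≤ r) (ht : 1 ≤ t)
    (hn : t * (r - 1) < n) {G : Finset (Finset ℕ)} (hG : IsGraphOn n r G)
    (hcov : ∀ u ∈ Icc 1 n, ∀ v ∈ Icc 1 n, u ≠ v → ∃ e ∈ G, u ∈ e ∧ v ∈ e)
    (hfree : LinearStarFree G t) {x : ℕ} (hx : x ∈ Icc 1 n) {S : Finset ℕ} (hxS : x ∉ S)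
    (hS : #S = t * (r - 1) - 1) : ¬∀ f ⊆ S, #f = r - 1 → insert x f ∈ G := by
  intro hlink
  obtain ⟨y, hy, hyxS⟩ := exists_mem_notMem_of_card_lt_card (s := insert x S) (t := Icc 1 n)
    (by
      have := card_insert_le x S
      have := Nat.mul_pos ht (by omega : 0 < r - 1)
      rw [Nat.card_Icc, Nat.add_sub_cancel]
      omega)
  obtain ⟨hyx, hyS⟩ : y ≠ x ∧ y ∉ S := by simpa using hyxS
  obtain ⟨e, heG, hxe, hye⟩ := hcov x hx y hy hyx.symm
  have hSinter : #(S ∩ e) ≤ r - 2 := by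
    have hsub : S ∩ e ⊆ e \ {x, y} := fun a ha => by
      obtain ⟨haS, hae⟩ := mem_inter.mp ha
      simp only [mem_sdiff, mem_insert, mem_singleton]
      exact ⟨hae, by rintro (rfl | rfl) <;> contradiction⟩
    have hxy : ({x, y} : Finset ℕ) ⊆ e := insert_subset hxe (singleton_subset_iff.mpr hye)
    simpa [card_sdiff_of_subset hxy, card_pair hyx.symm, (hG e heG).2] using card_le_card hsub
  have hSdiff : (t - 1) * (r - 1) ≤ #(S \ e) := by
    have := card_sdiff_add_card_inter S e
    have := Nat.le_mul_of_pos_left (r - 1) ht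
    rw [Nat.sub_one_mul]
    omega
  obtain ⟨M, hMt, hMS, hMd⟩ :=
    exists_pairwiseDisjoint_subsets_card_eq (by omega : r - 1 ≠ 0) (t - 1) hSdiff
  have hMe : ∀ f ∈ M, Disjoint e f := fun f hf =>
    disjoint_of_subset_right (hMS f hf).1 disjoint_sdiff
  have hMx : ∀ f ∈ M, x ∉ f := fun f hf h => hxS (mem_sdiff.mp ((hMS f hf).1 h)).1
  have hstar := (isLinearStar_image_insert (x := x) hMd).insert hxe fun _ hg => by
    obtain ⟨f, hf, rfl⟩ := mem_image.mp hg
    exact inter_insert_eq_singleton hxe (hMe f hf)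
  refine hfree ⟨x, _, insert_subset heG ?_, ?_, hstar⟩
  · exact image_subset_iff.mpr fun f hf =>
      hlink f ((hMS f hf).1.trans sdiff_subset) (hMS f hf).2
  · rw [card_insert_image_insert hMx fun f hf =>
      ⟨card_pos.mp (by rw [(hMS f hf).2]; omega), hMe f hf⟩]
    omega

theorem link_clique_free (n r t : ℕ) (hr : 2 ≤ r) (ht : 2 ≤ t)
    (hn : t*(r-1) + 1 ≤ n) (G : Finset (Finset ℕ)) (hG : IsGraphOn n r G)
    (hcov : ∀ u ∈ Finset.Icc 1 n, ∀ v ∈ Finset.Icc 1 n, u ≠ v →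
      ∃ e ∈ G, u ∈ e ∧ v ∈ e)
    (hfree : LinearStarFree G t) :
    (∀ x ∈ Finset.Icc 1 n, ¬∃ S : Finset ℕ, x ∉ S ∧ S.card = t*(r-1) - 1 ∧
      ∀ f ⊆ S, f.card = r - 1 → insert x f ∈ G) ∧
    ¬HasClique G (t*(r-1)) r := by
  have hlink_free : ∀ x ∈ Icc 1 n, ∀ S : Finset ℕ, x ∉ S → #S = t * (r - 1) - 1 →
      ¬∀ f ⊆ S, #f = r - 1 → insert x f ∈ G := fun _ hx _ =>
    not_forall_insert_mem_of_linearStarFree hr (by omega) hn hG hcov hfree hx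
  refine ⟨fun x hx ⟨S, hxS, hS, hlink⟩ => hlink_free x hx S hxS hS hlink, ?_⟩
  rintro ⟨S, hS, hclique⟩
  have hrS : r ≤ #S := calc
    r ≤ 2 * (r - 1) := by omega
    _ ≤ #S := hS ▸ Nat.mul_le_mul_right _ ht
  obtain ⟨x, hx⟩ : S.Nonempty := card_pos.mp (by omega)
  have hlink := insert_mem_of_forall_card_eq_mem hclique hx (by omega)
  obtain ⟨f, hf, hfr⟩ : ∃ f ⊆ S.erase x, #f = r - 1 :=
    exists_subset_card_eq (by rw [card_erase_of_mem hx]; omega)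
  have hxV : x ∈ Icc 1 n := (hG _ (hlink f hf hfr)).1 (mem_insert_self x f)
  exact hlink_free x hxV _ (notMem_erase x S) (by rw [card_erase_of_mem hx, hS]) hlink
end

section
/- Let $n\ge6$ and let $G$ be a 3-graph on $[n]$ with no isolated vertex, no two disjoint edges, that is left-compressed relative to the natural order. Then: (a) $\{1,2,i\}\in G$ for every $i\in\{3,\dots,n\}$; (b) every edge of $G$ contains vertex 1 or vertex 2; (c) the link of vertex 2 restricted to $\{3,\dots,n\}$, namely $L^+(2)=\{\{a,b\}\subseteq\{3,\dots,n\}: \{2,a,b\}\in G\}$, has no two disjoint edges, hence is empty, a triangle, or a star. -/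
open Finset

/-- The link of vertex `2` restricted to `{3,…,n}`. -/
def L2 (n : ℕ) (G : Finset (Finset ℕ)) : Finset (Finset ℕ) :=
  ((Finset.Icc 3 n).powersetCard 2).filter fun A => insert 2 A ∈ G

/-!
Left-compression shifts any edge through a vertex `i ≥ 3` first onto `{1, i, ·}` and then onto
`{1, 2, i}`. Since `n ≥ 6`, an edge avoiding both `1` and `2` misses some `i ∈ [3, n]` and is then
disjoint from `{1, 2, i}`. If `A, B ∈ L⁺(2)` were disjoint, shifting `2 ↦ 1` in `{2} ∪ B` would
give the edge `{1} ∪ B`, disjoint from `{2} ∪ A`. Finally an intersecting family of pairs that is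
not a star contains a triangle, and every pair meeting all three sides of a triangle is a side.
-/

section Intersecting

variable {α : Type*} [DecidableEq α]

lemma eq_pair_of_card_eq_two {s : Finset α} (hs : s.card = 2) {x y : α} (hxy : x ≠ y)
    (hx : x ∈ s) (hy : y ∈ s) : s = {x, y} :=
  (eq_of_subset_of_card_le (insert_subset hx (singleton_subset_iff.mpr hy))
    (by rw [hs, card_pair hxy])).symm

lemma mem_of_not_disjoint_pair {a b : α} {s : Finset α} (h : ¬Disjoint {a, b} s) (ha : a ∉ s) :
    b ∈ s := by
  obtain ⟨x, hx, hxs⟩ := not_disjoint_iff.mp h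
  rcases mem_insert.mp hx with rfl | hx
  · exact absurd hxs ha
  · rwa [mem_singleton.mp hx] at hxs

lemma pair_mem_triangle {a b c : α} (hab : a ≠ b) (hac : a ≠ c) (hbc : b ≠ c) {E : Finset α}
    (hE : E.card = 2) (hE_ab : ¬Disjoint {a, b} E) (hE_bc : ¬Disjoint {b, c} E)
    (hE_ac : ¬Disjoint {a, c} E) :
    E ∈ ({{a, b}, {a, c}, {b, c}} : Finset (Finset α)) := by
  simp only [mem_insert, mem_singleton]
  by_cases ha : a ∈ E
  · by_cases hb : b ∈ E
    · exact Or.inl (eq_pair_of_card_eq_two hE hab ha hb)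
    · exact Or.inr (Or.inl (eq_pair_of_card_eq_two hE hac ha (mem_of_not_disjoint_pair hE_bc hb)))
  · exact Or.inr (Or.inr (eq_pair_of_card_eq_two hE hbc (mem_of_not_disjoint_pair hE_ab ha)
      (mem_of_not_disjoint_pair hE_ac ha)))

theorem eq_empty_or_triangle_or_star_of_intersecting (H : Finset (Finset α))
    (hcard : ∀ A ∈ H, A.card = 2) (hint : ∀ A ∈ H, ∀ B ∈ H, ¬Disjoint A B) :
    H = ∅ ∨
      (∃ a b c : α, a ≠ b ∧ a ≠ c ∧ b ≠ c ∧ H = {{a, b}, {a, c}, {b, c}}) ∨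
      (∃ v, ∀ A ∈ H, v ∈ A) := by
  rcases H.eq_empty_or_nonempty with hH | ⟨A, hA⟩
  · exact Or.inl hH
  by_cases hstar : ∃ v, ∀ A ∈ H, v ∈ A
  · exact Or.inr (Or.inr hstar)
  push Not at hstar
  obtain ⟨a, b, hab, rfl⟩ := card_eq_two.mp (hcard A hA)
  obtain ⟨B, hB, haB⟩ := hstar a
  obtain ⟨C, hC, hbC⟩ := hstar b
  have hbB : b ∈ B := mem_of_not_disjoint_pair (hint _ hA _ hB) haB
  have haC : a ∈ C := mem_of_not_disjoint_pair (pair_comm a b ▸ hint _ hA _ hC) hbC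
  obtain ⟨c, hcB, hcb⟩ := exists_mem_ne (by rw [hcard B hB]; norm_num) b
  have hca : c ≠ a := fun h => haB (h ▸ hcB)
  have hB_eq : B = {b, c} := eq_pair_of_card_eq_two (hcard B hB) hcb.symm hbB hcB
  have hcC : c ∈ C := mem_of_not_disjoint_pair (hB_eq ▸ hint _ hB _ hC) hbC
  have hC_eq : C = {a, c} := eq_pair_of_card_eq_two (hcard C hC) hca.symm haC hcC
  refine Or.inr (Or.inl ⟨a, b, c, hab, hca.symm, hcb.symm, ?_⟩)
  ext E
  refine ⟨fun hE => pair_mem_triangle hab hca.symm hcb.symm (hcard E hE) (hint _ hA _ hE)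
    (hB_eq ▸ hint _ hB _ hE) (hC_eq ▸ hint _ hC _ hE), fun hE => ?_⟩
  simp only [mem_insert, mem_singleton] at hE
  rcases hE with rfl | rfl | rfl
  exacts [hA, hC_eq ▸ hC, hB_eq ▸ hB]

end Intersecting

namespace LeftCompressed

variable {n : ℕ} {G : Finset (Finset ℕ)}

lemma exists_mem_insert_subset (hc : LeftCompressed n G) {e S : Finset ℕ} (he : e ∈ G)
    (hen : e ⊆ Icc 1 n) (hSe : S ⊆ e) (hcard : S.card < e.card) {k : ℕ} (hk : 1 ≤ k)
    (hlow : ∀ x ∈ e, x < k → x ∈ S) : ∃ f ∈ G, insert k S ⊆ f := by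
  by_cases hke : k ∈ e
  · exact ⟨e, he, insert_subset hke hSe⟩
  obtain ⟨j, hje, hjS⟩ := exists_mem_notMem_of_card_lt_card hcard
  have hkj : k < j :=
    lt_of_le_of_ne (not_lt.mp fun h => hjS (hlow j hje h)) (fun h => hke (h ▸ hje))
  refine ⟨_, hc k j hk hkj (mem_Icc.mp (hen hje)).2 e he hje hke, insert_subset_insert k ?_⟩
  exact fun x hx => mem_erase.mpr ⟨fun h => hjS (h ▸ hx), hSe hx⟩

lemma insert_one_two_mem (hc : LeftCompressed n G) (hG : IsGraphOn n 3 G) {e : Finset ℕ}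
    (he : e ∈ G) {i : ℕ} (hi : i ∈ e) (hi3 : 3 ≤ i) : ({1, 2, i} : Finset ℕ) ∈ G := by
  have hpos {f : Finset ℕ} (hf : f ∈ G) {x : ℕ} (hx : x ∈ f) : 1 ≤ x :=
    (mem_Icc.mp ((hG f hf).1 hx)).1
  obtain ⟨f, hf, h1i⟩ : ∃ f ∈ G, ({1, i} : Finset ℕ) ⊆ f :=
    hc.exists_mem_insert_subset he (hG e he).1 (singleton_subset_iff.mpr hi)
      (by simp [(hG e he).2]) le_rfl (fun x hx hx1 => absurd (hpos he hx) (by omega))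
  obtain ⟨g, hg, h21i⟩ : ∃ g ∈ G, ({2, 1, i} : Finset ℕ) ⊆ g :=
    hc.exists_mem_insert_subset hf (hG f hf).1 h1i
      (by rw [(hG f hf).2]; exact card_le_two.trans_lt (by norm_num)) one_le_two
      (fun x hx hx2 => by simp [show x = 1 by have := hpos hf hx; omega])
  have h12i : ({1, 2, i} : Finset ℕ) = g := by
    refine eq_of_subset_of_card_le (by rwa [insert_comm] at h21i) ?_
    rw [(hG g hg).2, card_insert_of_notMem (by simp; omega), card_pair (by omega)]
  exact h12i ▸ hg

end LeftCompressed

section Structure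

variable {n : ℕ} {G : Finset (Finset ℕ)}

lemma one_mem_or_two_mem_of_intersecting (hn : 6 ≤ n) (hint : ∀ e ∈ G, ∀ f ∈ G, ¬Disjoint e f)
    (h12 : ∀ i ∈ Icc 3 n, ({1, 2, i} : Finset ℕ) ∈ G) {e : Finset ℕ} (he : e ∈ G)
    (he_card : e.card = 3) : 1 ∈ e ∨ 2 ∈ e := by
  by_contra h
  obtain ⟨h1, h2⟩ := not_or.mp h
  obtain ⟨i, hi, hie⟩ := exists_mem_notMem_of_card_lt_card (s := e) (t := Icc 3 n)
    (by rw [he_card, Nat.card_Icc]; omega)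
  exact hint _ (h12 i hi) e he
    (disjoint_insert_left.mpr ⟨h1, disjoint_insert_left.mpr ⟨h2, disjoint_singleton_left.mpr hie⟩⟩)

lemma card_of_mem_L2 {A : Finset ℕ} (hA : A ∈ L2 n G) : A.card = 2 :=
  (mem_powersetCard.mp (mem_filter.mp hA).1).2

lemma not_disjoint_of_mem_L2 (hn : 2 ≤ n) (hint : ∀ e ∈ G, ∀ f ∈ G, ¬Disjoint e f)
    (hc : LeftCompressed n G) {A B : Finset ℕ} (hA : A ∈ L2 n G) (hB : B ∈ L2 n G) :
    ¬Disjoint A B := by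
  intro hAB
  simp only [L2, mem_filter, mem_powersetCard] at hA hB
  have hlow {C : Finset ℕ} (hC : C ⊆ Icc 3 n) {x : ℕ} (hx : x < 3) : x ∉ C :=
    fun h => absurd (mem_Icc.mp (hC h)).1 (by omega)
  have h1B : 1 ∉ B := hlow hB.1.1 (by norm_num)
  have h2B : 2 ∉ B := hlow hB.1.1 (by norm_num)
  have h1A : 1 ∉ A := hlow hA.1.1 (by norm_num)
  have hB' : insert 1 B ∈ G := by
    have := hc 1 2 le_rfl one_lt_two hn _ hB.2 (mem_insert_self 2 B) (by simp [h1B])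
    rwa [erase_insert h2B] at this
  exact hint _ hA.2 _ hB' <| disjoint_insert_left.mpr
    ⟨by simp [h2B], disjoint_insert_right.mpr ⟨h1A, hAB⟩⟩

end Structure

theorem intersecting_left_compressed_structure (n : ℕ) (hn : 6 ≤ n)
    (G : Finset (Finset ℕ)) (hG : IsGraphOn n 3 G)
    (hiso : ∀ v ∈ Finset.Icc 1 n, ∃ e ∈ G, v ∈ e)
    (hint : ∀ e ∈ G, ∀ f ∈ G, ¬Disjoint e f)
    (hc : LeftCompressed n G) :
    (∀ i ∈ Finset.Icc 3 n, ({1, 2, i} : Finset ℕ) ∈ G) ∧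
    (∀ e ∈ G, 1 ∈ e ∨ 2 ∈ e) ∧
    (∀ A ∈ L2 n G, ∀ B ∈ L2 n G, ¬Disjoint A B) ∧
    (L2 n G = ∅ ∨
      (∃ a b c : ℕ, a ≠ b ∧ a ≠ c ∧ b ≠ c ∧
        L2 n G = {({a,b} : Finset ℕ), {a,c}, {b,c}}) ∨
      (∃ v, ∀ A ∈ L2 n G, v ∈ A)) := by
  have h12 : ∀ i ∈ Icc 3 n, ({1, 2, i} : Finset ℕ) ∈ G := by
    intro i hi
    obtain ⟨hi3, hin⟩ := mem_Icc.mp hi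
    obtain ⟨e, he, hie⟩ := hiso i (mem_Icc.mpr ⟨by omega, hin⟩)
    exact hc.insert_one_two_mem hG he hie hi3
  have hL2 : ∀ A ∈ L2 n G, ∀ B ∈ L2 n G, ¬Disjoint A B :=
    fun A hA B hB => not_disjoint_of_mem_L2 (by omega) hint hc hA hB
  exact ⟨h12, fun e he => one_mem_or_two_mem_of_intersecting hn hint h12 he (hG e he).2, hL2,
    eq_empty_or_triangle_or_star_of_intersecting _ (fun A hA => card_of_mem_L2 hA) hL2⟩
end

section
/- Let $n,r,t$ be positive integers with $r,t\ge2$ and $n\ge tr$. Let $G$ be an $r$-graph on $[n]$ with no $t$ pairwise disjoint edges, left-compressed relative to the natural order. Then the link $L_G(n)=\{f\in\binom{[n-1]}{r-1}: f\cup\{n\}\in G\}$ contains no $t$ pairwise disjoint $(r-1)$-sets. Moreover, if $r=3$ and some edge of $G$ contains both $n-1$ and $n$, then the induced subgraph $G[\{2,\dots,n\}]$ contains no $t-1$ pairwise disjoint edges. -/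
/-!
A matching `f₁, …, f_t` of the link of `n` covers `t (r - 1) ≤ n - t` vertices, so there are
`t` distinct uncovered vertices `vᵢ ≤ n`; left-compression replaces `n` by `vᵢ` in the edge
`fᵢ ∪ {n}`, and the edges `fᵢ ∪ {vᵢ}` are a matching of size `t` in `G`.

For `r = 3`, compressing an edge through `n - 1` and `n` gives the edge `{1, n - 1, n}`. Given
`t - 1` disjoint edges avoiding `1`, compress those of `n - 1`, `n` that they cover down to
uncovered vertices (there are enough since `n ≥ 3t`): the result is a `t`-th disjoint edge.
-/

open Finset

/-- The link of a vertex. -/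
def link (G : Finset (Finset ℕ)) (v : ℕ) : Finset (Finset ℕ) :=
  (G.filter fun e => v ∈ e).image fun e => e.erase v

lemma Finset.exists_injOn_of_card_le {α β : Type*} [Nonempty β] {s : Finset α} {t : Finset β}
    (h : s.card ≤ t.card) : ∃ φ : α → β, Set.InjOn φ s ∧ ∀ a ∈ s, φ a ∈ t := by
  obtain ⟨φ, hmaps, hinj⟩ := s.finite_toSet.exists_injOn_of_encard_le (t := (t : Set β))
    (by simpa using h)
  exact ⟨φ, hinj, fun a ha => hmaps ha⟩

lemma card_biUnion_id_add_card {M : Finset (Finset ℕ)} {r : ℕ}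
    (hdisj : (M : Set (Finset ℕ)).Pairwise fun e f => Disjoint e f)
    (hcard : ∀ f ∈ M, f.card + 1 = r) : (M.biUnion id).card + M.card = M.card * r := by
  calc (M.biUnion id).card + M.card = ∑ f ∈ M, (f.card + 1) := by
        rw [card_biUnion (t := id) hdisj, sum_add_distrib, card_eq_sum_ones M]; rfl
    _ = M.card * r := by rw [sum_congr rfl hcard, sum_const, smul_eq_mul]

lemma hasMatching_of_insert_fresh {G M : Finset (Finset ℕ)}
    (hdisj : (M : Set (Finset ℕ)).Pairwise fun e f => Disjoint e f)
    {φ : Finset ℕ → ℕ} (hinj : Set.InjOn φ M)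
    (hfresh : ∀ f ∈ M, ∀ g ∈ M, φ f ∉ g)
    (hG : ∀ f ∈ M, insert (φ f) f ∈ G) : HasMatching G M.card := by
  have hψinj : Set.InjOn (fun f => insert (φ f) f) M := by
    intro f hf g hg hfg
    have : φ f ∈ insert (φ g) g := by simp only at hfg; exact hfg ▸ mem_insert_self _ _
    exact hinj hf hg ((mem_insert.mp this).resolve_right (hfresh f hf g hg))
  refine ⟨M.image fun f => insert (φ f) f, image_subset_iff.mpr hG,
    card_image_of_injOn hψinj, ?_⟩
  simp only [coe_image]
  rintro _ ⟨f, hf, rfl⟩ _ ⟨g, hg, rfl⟩ hne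
  have hfg : f ≠ g := fun h => hne (h ▸ rfl)
  have hφ : φ f ≠ φ g := fun h => hfg (hinj hf hg h)
  simp only [disjoint_insert_left, disjoint_insert_right, mem_insert, not_or]
  exact ⟨⟨hφ.symm, hfresh g hg f hf⟩, hfresh f hf g hg, hdisj hf hg hfg⟩

lemma hasMatching_insert {G M : Finset (Finset ℕ)} (hMG : M ⊆ G)
    (hdisj : (M : Set (Finset ℕ)).Pairwise fun e f => Disjoint e f)
    {e : Finset ℕ} (he : e ∈ G) (hne : e.Nonempty) (heM : ∀ f ∈ M, Disjoint e f) :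
    HasMatching G (M.card + 1) := by
  have heM' : e ∉ M := fun h => hne.ne_empty (disjoint_self.mp (heM e h))
  refine ⟨insert e M, insert_subset he hMG, card_insert_of_notMem heM', ?_⟩
  rw [coe_insert]
  exact hdisj.insert fun f hf _ => ⟨heM f hf, (heM f hf).symm⟩

lemma card_one_pred_self {n : ℕ} (hn : 3 ≤ n) : ({1, n - 1, n} : Finset ℕ).card = 3 := by
  rw [card_insert_of_notMem (by simp; omega), card_pair (by omega)]

namespace LeftCompressed

variable {n : ℕ} {G : Finset (Finset ℕ)}

lemma insert_mem (hc : LeftCompressed n G) {f : Finset ℕ} (hf : insert n f ∈ G) (hnf : n ∉ f)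
    {y : ℕ} (hy1 : 1 ≤ y) (hyn : y ≤ n) (hyf : y ∉ f) : insert y f ∈ G := by
  obtain rfl | hlt := hyn.eq_or_lt
  · exact hf
  · have := hc y n hy1 hlt le_rfl _ hf (mem_insert_self n f) (by simp [hyf, hlt.ne])
    rwa [erase_insert hnf] at this

lemma exists_mem_shift (hc : LeftCompressed n G) {s : Finset ℕ} :
    ∀ {e F : Finset ℕ}, e ∈ G → s ⊆ e → Disjoint F e → (∀ y ∈ F, 1 ≤ y) →
      (∀ x ∈ s, x ≤ n) → (∀ x ∈ s, ∀ y ∈ F, y < x) → s.card ≤ F.card →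
      ∃ e' ∈ G, e \ s ⊆ e' ∧ e' ⊆ (e \ s) ∪ F := by
  induction s using Finset.induction_on with
  | empty => exact fun he _ _ _ _ _ _ => ⟨_, he, by simp, by simp⟩
  | insert a s has ih =>
    intro e F he hse hFe hF1 hsn hlt hcard
    rw [card_insert_of_notMem has] at hcard
    obtain ⟨y, hy⟩ : F.Nonempty := card_pos.mp (by omega)
    have hae : a ∈ e := hse (mem_insert_self a s)
    have hye : y ∉ e := disjoint_left.mp hFe hy
    have he1 : insert y (e.erase a) ∈ G :=
      hc y a (hF1 y hy) (hlt a (mem_insert_self a s) y hy) (hsn a (mem_insert_self a s))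
        e he hae hye
    have hse1 : s ⊆ insert y (e.erase a) := fun x hx =>
      mem_insert_of_mem (mem_erase.mpr ⟨fun h => has (h ▸ hx), hse (mem_insert_of_mem hx)⟩)
    have hFe1 : Disjoint (F.erase y) (insert y (e.erase a)) := by
      simp only [disjoint_left, mem_erase, mem_insert, not_or]
      exact fun x hx => ⟨hx.1, fun h => disjoint_left.mp hFe hx.2 h.2⟩
    have hcard1 : s.card ≤ (F.erase y).card := by
      rw [card_erase_of_mem hy]
      omega
    obtain ⟨e', he'G, hsub, hsup⟩ := ih he1 hse1 hFe1
      (fun x hx => hF1 x (mem_of_mem_erase hx)) (fun x hx => hsn x (mem_insert_of_mem hx))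
      (fun x hx z hz => hlt x (mem_insert_of_mem hx) z (mem_of_mem_erase hz)) hcard1
    refine ⟨e', he'G, fun x hx => hsub ?_, fun x hx => ?_⟩
    · simp only [mem_sdiff, mem_insert, not_or] at hx ⊢
      exact ⟨Or.inr (mem_erase.mpr ⟨hx.2.1, hx.1⟩), hx.2.2⟩
    · have := hsup hx
      simp only [mem_union, mem_sdiff, mem_insert, mem_erase, not_or] at this ⊢
      rcases this with ⟨rfl | ⟨hxa, hxe⟩, hxs⟩ | ⟨-, hxF⟩
      · exact Or.inr hy
      · exact Or.inl ⟨hxe, hxa, hxs⟩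
      · exact Or.inr hxF

lemma one_pred_self_mem (hc : LeftCompressed n G) (hG : IsGraphOn n 3 G) (hn : 3 ≤ n)
    {e : Finset ℕ} (he : e ∈ G) (hn1e : n - 1 ∈ e) (hne : n ∈ e) : {1, n - 1, n} ∈ G := by
  by_cases h1e : 1 ∈ e
  · convert he
    exact eq_of_subset_of_card_le (by simp [insert_subset_iff, *])
      (by rw [card_one_pred_self hn, (hG e he).2])
  · obtain ⟨a, hae, hane⟩ : ∃ a ∈ e, a ∉ ({n - 1, n} : Finset ℕ) :=
      not_subset.mp fun hsub => by
        have := card_le_card hsub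
        rw [(hG e he).2] at this
        have := card_le_two (a := n - 1) (b := n)
        omega
    have ha := mem_Icc.mp ((hG e he).1 hae)
    have ha1 : 1 < a := lt_of_le_of_ne ha.1 (by rintro rfl; exact h1e hae)
    have hE' := hc 1 a le_rfl ha1 ha.2 e he hae h1e
    simp only [mem_insert, mem_singleton, not_or] at hane
    convert hE' using 2
    refine eq_of_subset_of_card_le ?_ ?_
    · simp [insert_subset_iff, *, Ne.symm hane.1, Ne.symm hane.2]
    · rw [card_erase_of_mem hae, (hG e he).2, card_pair (by omega)]

end LeftCompressed

lemma hasMatching_of_hasMatching_link {n r t : ℕ} {G : Finset (Finset ℕ)} (hG : IsGraphOn n r G)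
    (hc : LeftCompressed n G) (hn : t * r ≤ n) (h : HasMatching (link G n) t) :
    HasMatching G t := by
  obtain ⟨M, hMlink, rfl, hdisj⟩ := h
  have hlink : ∀ f ∈ M, insert n f ∈ G ∧ n ∉ f ∧ f.card + 1 = r := by
    intro f hf
    obtain ⟨e, he, rfl⟩ := mem_image.mp (hMlink hf)
    rw [mem_filter] at he
    refine ⟨by rw [insert_erase he.2]; exact he.1, notMem_erase n e, ?_⟩
    rw [card_erase_add_one he.2, (hG e he.1).2]
  set U := M.biUnion id
  have hU : U.card + M.card = M.card * r :=
    card_biUnion_id_add_card hdisj fun f hf => (hlink f hf).2.2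
  have hcard : M.card ≤ (Icc 1 n \ U).card := by
    have := le_card_sdiff U (Icc 1 n)
    rw [Nat.card_Icc] at this
    omega
  obtain ⟨φ, hinj, hφ⟩ := exists_injOn_of_card_le hcard
  have hfresh : ∀ f ∈ M, 1 ≤ φ f ∧ φ f ≤ n ∧ ∀ g ∈ M, φ f ∉ g := by
    intro f hf
    have := hφ f hf
    simp only [U, mem_sdiff, mem_Icc, mem_biUnion, id, not_exists, not_and] at this
    exact ⟨this.1.1, this.1.2, this.2⟩
  refine hasMatching_of_insert_fresh hdisj hinj (fun f hf => (hfresh f hf).2.2) fun f hf => ?_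
  obtain ⟨hfG, hnf, -⟩ := hlink f hf
  obtain ⟨hy1, hyn, hyM⟩ := hfresh f hf
  exact hc.insert_mem hfG hnf hy1 hyn (hyM f hf)

lemma hasMatching_succ_of_hasMatching_filter {n t : ℕ} {G : Finset (Finset ℕ)}
    (hG : IsGraphOn n 3 G) (hc : LeftCompressed n G) (hn : (t + 1) * 3 ≤ n)
    (he : ∃ e ∈ G, n - 1 ∈ e ∧ n ∈ e) (h : HasMatching (G.filter fun e => 1 ∉ e) t) :
    HasMatching G (t + 1) := by
  obtain ⟨e, he, hn1e, hne⟩ := he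
  obtain ⟨M, hMG, rfl, hdisj⟩ := h
  have hMfilter : ∀ f ∈ M, f ∈ G ∧ 1 ∉ f := fun f hf => mem_filter.mp (hMG hf)
  set E : Finset ℕ := {1, n - 1, n}
  have hEG : E ∈ G := hc.one_pred_self_mem hG (by omega) he hn1e hne
  have hE : E.card = 3 := card_one_pred_self (by omega)
  set U := M.biUnion id
  have hU : U.card + M.card = M.card * 4 :=
    card_biUnion_id_add_card hdisj fun f hf => by rw [(hG f (hMfilter f hf).1).2]
  have h1U : 1 ∉ U := by
    simp only [U, mem_biUnion, id, not_exists, not_and]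
    exact fun f hf => (hMfilter f hf).2
  set F := Icc 1 n \ (U ∪ E)
  have hcard : (E ∩ U).card ≤ F.card := by
    have h1 : n - (U ∪ E).card ≤ F.card := by
      simpa only [Nat.card_Icc, add_tsub_cancel_right] using le_card_sdiff (U ∪ E) (Icc 1 n)
    have h2 := card_union_add_card_inter U E
    rw [inter_comm] at h2
    omega
  have hlt : ∀ x ∈ E ∩ U, ∀ y ∈ F, y < x := by
    intro x hx y hy
    simp only [E, F, mem_inter, mem_sdiff, mem_union, mem_insert, mem_singleton, mem_Icc,
      not_or] at hx hy
    rcases hx with ⟨rfl | rfl | rfl, hxU⟩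
    · exact absurd hxU h1U
    all_goals omega
  obtain ⟨e', he'G, hsub, hsup⟩ := hc.exists_mem_shift hEG inter_subset_left
    (disjoint_sdiff_self_left.mono_right subset_union_right)
    (fun y hy => (mem_Icc.mp (mem_sdiff.mp hy).1).1)
    (fun x hx => by simp only [E, mem_inter, mem_insert, mem_singleton] at hx; omega) hlt hcard
  refine hasMatching_insert (fun f hf => (hMfilter f hf).1) hdisj he'G ⟨1, hsub ?_⟩
    fun f hf => ?_
  · simp [E, h1U]
  · have hfU : f ⊆ U := subset_biUnion_of_mem id hf
    refine disjoint_of_subset_left hsup (disjoint_of_subset_right hfU ?_)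
    simp only [disjoint_left, mem_union, mem_sdiff, mem_inter]
    tauto

theorem sub_structures_general (n r t : ℕ) (hn : t*r ≤ n)
    (G : Finset (Finset ℕ)) (hG : IsGraphOn n r G) (hM : ¬HasMatching G t)
    (hc : LeftCompressed n G) :
    ¬HasMatching (link G n) t ∧
    (r = 3 → (∃ e ∈ G, n-1 ∈ e ∧ n ∈ e) →
      ¬HasMatching (G.filter fun e => 1 ∉ e) (t-1)) := by
  refine ⟨fun h => hM (hasMatching_of_hasMatching_link hG hc hn h), ?_⟩
  rintro rfl he h
  obtain _ | t := t
  · exact hM (hasMatching_zero G)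
  · exact hM (hasMatching_succ_of_hasMatching_filter hG hc hn he h)

theorem sub_structures (n r t : ℕ) (hr : 2 ≤ r) (ht : 2 ≤ t) (hn : t*r ≤ n)
    (G : Finset (Finset ℕ)) (hG : IsGraphOn n r G) (hM : ¬HasMatching G t)
    (hc : LeftCompressed n G) :
    ¬HasMatching (link G n) t ∧
    (r = 3 → (∃ e ∈ G, n-1 ∈ e ∧ n ∈ e) →
      ¬HasMatching (G.filter fun e => 1 ∉ e) (t-1)) :=
  sub_structures_general n r t hn G hG hM hc
end
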